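/- Let X and Y be real-valued random variables with cumulative distribution functions F_X and F_Y (nondecreasing and right-continuous), and quantile functions Q_X(q) := inf { t : ℝ | F_X(t) ≥ q }, Q_Y(q) := inf { t : ℝ | F_Y(t) ≥ q }. Let q_1 < q_2 < ... < q_m be quantile levels in (0,1) with m ≥ 2. Assume that for each i with 1 ≤ i < m the set { k | 1 ≤ k ≤ m ∧ Q_Y(q_k) ≥ Q_X(q_{i+1}) } is nonempty, and let β(i) be its minimum. Define the estimated upper violation ε̃_u := max over 1 ≤ i < m of (q_{β(i)} − q_i). Then for every x ∈ ℝ with Q_X(q_1) ≤ x and x < Q_X(q_m), the true violation satisfies F_Y(x) − F_X(x) < ε̃_u. -/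

import Mathlib

/-!
Let `x` lie in the bracket `Q_X(q_i) ≤ x < Q_X(q_{i+1})`. The Galois connection
`p ≤ F x ↔ Q(p) ≤ x` between a right-continuous CDF and its quantile function gives
`q_i ≤ F_X(x)`, and, since `x < Q_X(q_{i+1}) ≤ Q_Y(q_{β(i)})`, also `F_Y(x) < q_{β(i)}`.
Hence `F_Y(x) - F_X(x) < q_{β(i)} - q_i ≤ ε̃_u`.
-/

open MeasureTheory Filter Topology ProbabilityTheory

theorem Nat.exists_and_not_succ_of_le_of_not {P : ℕ → Prop} {a b : ℕ} (hab : a ≤ b)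
    (ha : P a) (hb : ¬ P b) : ∃ i, a ≤ i ∧ i < b ∧ P i ∧ ¬ P (i + 1) := by
  induction b, hab using Nat.le_induction with
  | base => exact absurd ha hb
  | succ b hab ih =>
    by_cases hPb : P b
    · exact ⟨b, hab, b.lt_succ_self, hPb, hb⟩
    · obtain ⟨i, hai, hib, hPi, hPi'⟩ := ih hPb
      exact ⟨i, hai, hib.trans b.lt_succ_self, hPi, hPi'⟩

namespace StieltjesFunction

variable {R : Type*} [ConditionallyCompleteLinearOrder R] [TopologicalSpace R] [OrderTopology R]

theorem le_iff_csInf_le (f : StieltjesFunction R) {p : ℝ} (hne : {t | p ≤ f t}.Nonempty)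
    (hbdd : BddBelow {t | p ≤ f t}) (x : R) : p ≤ f x ↔ sInf {t | p ≤ f t} ≤ x := by
  refine ⟨fun hx => csInf_le hbdd hx, fun hx => le_trans ?_ (f.mono hx)⟩
  have hcont : ContinuousWithinAt f {t | p ≤ f t} (sInf {t | p ≤ f t}) :=
    (f.right_continuous _).mono fun t ht => csInf_le hbdd ht
  simpa only [closure_Ici, Set.mem_Ici] using
    hcont.mem_closure (csInf_mem_closure hne hbdd) (t := Set.Ici p) fun t ht => ht

end StieltjesFunction

namespace ProbabilityTheory

theorem le_cdf_iff_sInf_le (μ : Measure ℝ) {p : ℝ} (hp0 : 0 < p) (hp1 : p < 1) (x : ℝ) :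
    p ≤ cdf μ x ↔ sInf {t | p ≤ cdf μ t} ≤ x := by
  refine (cdf μ).le_iff_csInf_le ?_ ?_ x
  · exact ((tendsto_cdf_atTop μ).eventually (eventually_ge_nhds hp1)).exists
  · obtain ⟨b, hb⟩ := ((tendsto_cdf_atBot μ).eventually (eventually_lt_nhds hp0)).exists
    exact ⟨b, fun t ht => le_of_not_gt fun htb => ((monotone_cdf μ htb.le).trans_lt hb).not_ge ht⟩

end ProbabilityTheory

theorem estimated_violation_bounds_true_violation_general
    (μX μY : Measure ℝ) [IsProbabilityMeasure μX] [IsProbabilityMeasure μY]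
    (FX FY : ℝ → ℝ)
    (hFX : FX = fun t => (μX (Set.Iic t)).toReal)
    (hFY : FY = fun t => (μY (Set.Iic t)).toReal)
    (QX QY : ℝ → ℝ)
    (hQX : ∀ p, 0 < p → p < 1 → QX p = sInf {t : ℝ | p ≤ FX t})
    (hQY : ∀ p, 0 < p → p < 1 → QY p = sInf {t : ℝ | p ≤ FY t})
    (m : ℕ)
    (q : ℕ → ℝ)
    (hq_mem : ∀ i, 1 ≤ i → i ≤ m → q i ∈ Set.Ioo (0 : ℝ) 1)
    (β : ℕ → ℕ)
    (hβ_mem : ∀ i, 1 ≤ i → i < m →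
      1 ≤ β i ∧ β i ≤ m ∧ QX (q (i + 1)) ≤ QY (q (β i)))
    (εu : ℝ)
    (hεu : IsGreatest {e : ℝ | ∃ i, 1 ≤ i ∧ i < m ∧ e = q (β i) - q i} εu) :
    ∀ x : ℝ, QX (q 1) ≤ x → x < QX (q m) → FY x - FX x < εu := by
  intro x hx1 hxm
  have hFX' : FX = cdf μX := funext fun t => by rw [hFX, cdf_eq_real]; rfl
  have hFY' : FY = cdf μY := funext fun t => by rw [hFY, cdf_eq_real]; rfl
  subst hFX' hFY'
  have hq_le_iff (μ : Measure ℝ) (Q : ℝ → ℝ)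
      (hQ : ∀ p, 0 < p → p < 1 → Q p = sInf {t : ℝ | p ≤ cdf μ t})
      {k : ℕ} (hk1 : 1 ≤ k) (hkm : k ≤ m) : q k ≤ cdf μ x ↔ Q (q k) ≤ x := by
    obtain ⟨hp0, hp1⟩ := hq_mem k hk1 hkm
    rw [hQ _ hp0 hp1]
    exact le_cdf_iff_sInf_le μ hp0 hp1 x
  obtain ⟨j, hj1, hjm, -⟩ := hεu.1
  obtain ⟨i, hi1, him, hQXi, hQXi'⟩ :=
    Nat.exists_and_not_succ_of_le_of_not (P := fun k => QX (q k) ≤ x) (by omega) hx1 hxm.not_ge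
  obtain ⟨hβ1, hβm, hQβ⟩ := hβ_mem i hi1 him
  have hFXx : q i ≤ cdf μX x := (hq_le_iff μX QX hQX hi1 him.le).mpr hQXi
  have hFYx : cdf μY x < q (β i) :=
    lt_of_not_ge fun h => (lt_of_not_ge hQXi').not_ge <|
      hQβ.trans ((hq_le_iff μY QY hQY hβ1 hβm).mp h)
  linarith [hεu.2 ⟨i, hi1, him, rfl⟩]

/-- **Lemma 2 (the estimated violation bounds the true violation).**
Let `X`, `Y` be real random variables (laws `μX`, `μY`) with CDFs
`F_X(t) = μX((-∞, t])`, `F_Y(t) = μY((-∞, t])` and quantile functions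
`Q_X(q) = inf {t | F_X(t) ≥ q}`, `Q_Y(q) = inf {t | F_Y(t) ≥ q}`.
Given quantile levels `q 1 < q 2 < ... < q m` in `(0,1)` with `m ≥ 2`, suppose
for each `1 ≤ i < m` the set `{k | 1 ≤ k ≤ m ∧ Q_Y(q k) ≥ Q_X(q (i+1))}` is
nonempty with minimum `β i`, and let `ε̃_u` be the maximum over `1 ≤ i < m` of
`q (β i) − q i`. Then for every `x` with `Q_X(q 1) ≤ x < Q_X(q m)`, the true
violation satisfies `F_Y(x) − F_X(x) < ε̃_u`. -/
theorem estimated_violation_bounds_true_violation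
    (μX μY : Measure ℝ) [IsProbabilityMeasure μX] [IsProbabilityMeasure μY]
    (FX FY : ℝ → ℝ)
    (hFX : FX = fun t => (μX (Set.Iic t)).toReal)
    (hFY : FY = fun t => (μY (Set.Iic t)).toReal)
    (QX QY : ℝ → ℝ)
    (hQX : ∀ p, 0 < p → p < 1 → QX p = sInf {t : ℝ | p ≤ FX t})
    (hQY : ∀ p, 0 < p → p < 1 → QY p = sInf {t : ℝ | p ≤ FY t})
    (m : ℕ) (hm : 2 ≤ m)
    (q : ℕ → ℝ)
    (hq_mem : ∀ i, 1 ≤ i → i ≤ m → q i ∈ Set.Ioo (0 : ℝ) 1)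
    (hq_mono : ∀ i j, 1 ≤ i → i < j → j ≤ m → q i < q j)
    (β : ℕ → ℕ)
    (hβ_mem : ∀ i, 1 ≤ i → i < m →
      1 ≤ β i ∧ β i ≤ m ∧ QX (q (i + 1)) ≤ QY (q (β i)))
    (hβ_min : ∀ i, 1 ≤ i → i < m →
      ∀ k, 1 ≤ k → k ≤ m → QX (q (i + 1)) ≤ QY (q k) → β i ≤ k)
    (εu : ℝ)
    (hεu : IsGreatest {e : ℝ | ∃ i, 1 ≤ i ∧ i < m ∧ e = q (β i) - q i} εu) :
    ∀ x : ℝ, QX (q 1) ≤ x → x < QX (q m) → FY x - FX x < εu :=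
  estimated_violation_bounds_true_violation_general μX μY FX FY hFX hFY QX QY hQX hQY m q hq_mem β
    hβ_mem εu hεu
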